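/- Let δ > 0, let Δ₀ be a real number with |Δ₀| < δ, let V₁, V₂, … be independent real random variables each uniformly distributed on [−δ, δ], and define recursively Δⱼ = Δⱼ₋₁ − Vⱼ for j ≥ 1. Then the probability that |Vⱼ| + |Δⱼ| < δ holds for all j ≥ 1 is 0; i.e., almost surely the run of consecutive forced moves is finite. -/

import Mathlib

open MeasureTheory ProbabilityTheory

open scoped ENNReal

/-!
Whatever happened during the first `k` moves, the next velocity is independent of it and uniform
on `[-δ, δ]`, and a forced move from distance `c` needs `|2V - c| < δ`, an event of probability at
most `1/2`. Hence the probability that the first `k + 1` moves are forced is at most half the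
probability that the first `k` are, and an infinite run of forced moves has probability at most
`2⁻ᵏ` for every `k`.
-/

/-- The uniform probability measure on the interval `[a, b]`. -/
noncomputable def uniformIcc (a b : ℝ) : Measure ℝ :=
  (ENNReal.ofReal (b - a))⁻¹ • volume.restrict (Set.Icc a b)

lemma uniformIcc_apply_le (a b : ℝ) (s : Set ℝ) :
    uniformIcc a b s ≤ (ENNReal.ofReal (b - a))⁻¹ * volume s := by
  rw [uniformIcc, Measure.smul_apply, smul_eq_mul]
  exact mul_le_mul_right (Measure.restrict_apply_le _ _) _

/-- Pairs (signed distance to the attractor, new velocity) for which the next move is again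
forced. -/
def forcedMoves (δ : ℝ) : Set (ℝ × ℝ) := {p | |p.2| + |p.1 - p.2| < δ}

lemma measurableSet_forcedMoves (δ : ℝ) : MeasurableSet (forcedMoves δ) :=
  measurableSet_lt (by fun_prop) measurable_const

/-- A forced move from distance `c` has `|2v - c| ≤ |v| + |c - v| < δ`, so `v` lies in an interval
of length `δ`. -/
lemma volume_section_forcedMoves_le (δ c : ℝ) :
    volume (Prod.mk c ⁻¹' forcedMoves δ) ≤ ENNReal.ofReal δ := by
  have hsub : Prod.mk c ⁻¹' forcedMoves δ ⊆ Set.Ioo ((c - δ) / 2) ((c + δ) / 2) := by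
    intro v hv
    have h : |v - (c - v)| < δ := (abs_sub _ _).trans_lt hv
    rw [abs_lt] at h
    constructor <;> linarith [h.1, h.2]
  calc volume (Prod.mk c ⁻¹' forcedMoves δ)
      ≤ volume (Set.Ioo ((c - δ) / 2) ((c + δ) / 2)) := measure_mono hsub
    _ = ENNReal.ofReal δ := by rw [Real.volume_Ioo]; ring_nf

lemma uniformIcc_section_forcedMoves_le {δ : ℝ} (hδ : 0 < δ) (c : ℝ) :
    uniformIcc (-δ) δ (Prod.mk c ⁻¹' forcedMoves δ) ≤ 2⁻¹ := by
  have h2δ : ENNReal.ofReal (δ - -δ) = 2 * ENNReal.ofReal δ := by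
    rw [sub_neg_eq_add, ENNReal.ofReal_add hδ.le hδ.le, two_mul]
  calc uniformIcc (-δ) δ (Prod.mk c ⁻¹' forcedMoves δ)
      ≤ (ENNReal.ofReal (δ - -δ))⁻¹ * ENNReal.ofReal δ :=
        (uniformIcc_apply_le _ _ _).trans (by gcongr; exact volume_section_forcedMoves_le δ c)
    _ = 2⁻¹ := by
      rw [h2δ, ENNReal.mul_inv (by simp) (by simp), mul_assoc,
        ENNReal.inv_mul_cancel (by simpa using hδ) ENNReal.ofReal_ne_top, mul_one]

lemma measure_inter_le_of_indep {Ω β γ : Type*} {m mΩ : MeasurableSpace Ω} [MeasurableSpace β]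
    [MeasurableSpace γ] {P : Measure Ω} [IsFiniteMeasure P]
    (hm : m ≤ mΩ) {X : Ω → γ} (hX : Measurable X) (hind : Indep m (MeasurableSpace.comap X ‹_›) P)
    {A : Set Ω} (hA : MeasurableSet[m] A) {Z : Ω → β} (hZ : Measurable[m] Z)
    {T : Set (β × γ)} (hT : MeasurableSet T) {p : ℝ≥0∞}
    (hp : ∀ z, P.map X (Prod.mk z ⁻¹' T) ≤ p) :
    P (A ∩ {ω | (Z ω, X ω) ∈ T}) ≤ p * P A := by
  -- Pack the `m`-measurable data into `Y = (Z, 1_A)`, which is independent of `X`.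
  set Y : Ω → β × Prop := fun ω => (Z ω, ω ∈ A)
  have hYm : Measurable[m] Y := hZ.prodMk ((@measurableSet_setOfPred Ω m (· ∈ A)).mp hA)
  have hY : Measurable Y := hYm.mono hm le_rfl
  have hYX : IndepFun Y X P :=
    (IndepFun_iff_Indep Y X P).mpr (indep_of_indep_of_le_left hind hYm.comap_le)
  set B : Set (β × Prop) := {y | y.2}
  set C : Set ((β × Prop) × γ) := {q | q.1.2 ∧ (q.1.1, q.2) ∈ T}
  have hB : MeasurableSet B := measurableSet_setOfPred.mpr measurable_snd
  have hC : MeasurableSet C :=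
    (measurableSet_setOfPred.mpr (measurable_snd.comp measurable_fst)).inter
      (hT.preimage (measurable_fst.fst.prodMk measurable_snd))
  have hsection : ∀ y, P.map X (Prod.mk y ⁻¹' C) ≤ B.indicator (fun _ => p) y := by
    rintro ⟨z, a⟩
    by_cases ha : a
    · have hCT : Prod.mk (z, a) ⁻¹' C = Prod.mk z ⁻¹' T := by ext; simp [C, ha]
      rw [hCT, Set.indicator_of_mem (show (z, a) ∈ B from ha)]
      exact hp z
    · simp [C, B, ha]
  calc P (A ∩ {ω | (Z ω, X ω) ∈ T})
      = ((P.map Y).prod (P.map X)) C := by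
        rw [← (indepFun_iff_map_prod_eq_prod_map_map hY.aemeasurable hX.aemeasurable).mp hYX,
          Measure.map_apply (hY.prodMk hX) hC]
        rfl
    _ = ∫⁻ y, P.map X (Prod.mk y ⁻¹' C) ∂(P.map Y) := Measure.prod_apply hC
    _ ≤ ∫⁻ y, B.indicator (fun _ => p) y ∂(P.map Y) := lintegral_mono hsection
    _ = p * P A := by
        rw [lintegral_indicator_const hB, Measure.map_apply hY hB]
        rfl

lemma measure_iInter_eq_zero_of_le_mul {Ω : Type*} {mΩ : MeasurableSpace Ω} {P : Measure Ω}
    [IsFiniteMeasure P] {E : ℕ → Set Ω} {r : ℝ≥0∞} (hr : r < 1)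
    (h : ∀ k, P (E (k + 1)) ≤ r * P (E k)) : P (⋂ k, E k) = 0 := by
  have hgeom : ∀ k, P (E k) ≤ r ^ k * P (E 0) := by
    intro k
    induction k with
    | zero => simp
    | succ k ih =>
      calc P (E (k + 1)) ≤ r * P (E k) := h k
        _ ≤ r * (r ^ k * P (E 0)) := by gcongr
        _ = r ^ (k + 1) * P (E 0) := by rw [pow_succ', mul_assoc]
  have hlim : Filter.Tendsto (fun k => r ^ k * P (E 0)) Filter.atTop (nhds 0) := by
    simpa using ENNReal.Tendsto.mul_const (ENNReal.tendsto_pow_atTop_nhds_zero_of_lt_one hr)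
      (Or.inr (measure_ne_top P _))
  exact le_antisymm
    (ge_of_tendsto' hlim fun k => (measure_mono (Set.iInter_subset E k)).trans (hgeom k)) bot_le

section ForcedRun

variable {Ω : Type*} {V Δ : ℕ → Ω → ℝ} {δ : ℝ}

def forcedRun (V Δ : ℕ → Ω → ℝ) (δ : ℝ) (k : ℕ) : Set Ω :=
  {ω | ∀ j, 1 ≤ j → j ≤ k → |V j ω| + |Δ j ω| < δ}

lemma forcedRun_zero : forcedRun V Δ δ 0 = Set.univ := by
  ext ω
  simp only [forcedRun, Set.mem_ofPred_eq, Set.mem_univ, iff_true]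
  intro j h1 h0
  omega

lemma forcedRun_succ (hrec : ∀ j, Δ (j + 1) = fun ω => Δ j ω - V (j + 1) ω) (k : ℕ) :
    forcedRun V Δ δ (k + 1) =
      forcedRun V Δ δ k ∩ {ω | (Δ k ω, V (k + 1) ω) ∈ forcedMoves δ} := by
  ext ω
  simp only [forcedRun, forcedMoves, Set.mem_inter_iff, Set.mem_ofPred_eq]
  constructor
  · intro h
    exact ⟨fun j h1 h2 => h j h1 (by omega), by simpa [hrec k] using h (k + 1) (by omega) le_rfl⟩
  · rintro ⟨h, hlast⟩ j h1 h2
    rcases Nat.lt_or_ge j (k + 1) with hj | hj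
    · exact h j h1 (by omega)
    · obtain rfl : j = k + 1 := by omega
      simpa [hrec k] using hlast

variable [MeasurableSpace Ω] (hV : ∀ i, StronglyMeasurable (V i))

lemma measurable_natural_of_rec {Δ₀ : ℝ} (hΔ0 : Δ 0 = fun _ => Δ₀)
    (hrec : ∀ j, Δ (j + 1) = fun ω => Δ j ω - V (j + 1) ω) (k : ℕ) :
    Measurable[Filtration.natural V hV k] (Δ k) := by
  induction k with
  | zero => rw [hΔ0]; exact measurable_const
  | succ k ih =>
    rw [hrec k]
    exact (ih.mono ((Filtration.natural V hV).mono k.le_succ) le_rfl).sub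
      (Filtration.stronglyAdapted_natural hV (k + 1)).measurable

lemma measurableSet_natural_forcedRun {Δ₀ : ℝ} (hΔ0 : Δ 0 = fun _ => Δ₀)
    (hrec : ∀ j, Δ (j + 1) = fun ω => Δ j ω - V (j + 1) ω) (k : ℕ) :
    MeasurableSet[Filtration.natural V hV k] (forcedRun V Δ δ k) := by
  induction k with
  | zero => rw [forcedRun_zero]; exact MeasurableSet.univ
  | succ k ih =>
    have hmono := (Filtration.natural V hV).mono k.le_succ
    rw [forcedRun_succ hrec]
    have hΔk := (measurable_natural_of_rec hV hΔ0 hrec k).mono hmono le_rfl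
    have hVk := (Filtration.stronglyAdapted_natural hV (k + 1)).measurable
    exact (hmono _ ih).inter ((measurableSet_forcedMoves δ).preimage (hΔk.prodMk hVk))

end ForcedRun

theorem stmt2_general {Ω : Type*} [MeasurableSpace Ω] (P : Measure Ω) [IsProbabilityMeasure P]
    (δ Δ₀ : ℝ) (hδ : 0 < δ)
    (V : ℕ → Ω → ℝ) (hVmeas : ∀ j, Measurable (V j))
    (hindep : iIndepFun V P)
    (hVunif : ∀ j, Measure.map (V j) P = uniformIcc (-δ) δ)
    (Δ : ℕ → Ω → ℝ) (hΔ0 : Δ 0 = fun _ => Δ₀)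
    (hrec : ∀ j, Δ (j + 1) = fun ω => Δ j ω - V (j + 1) ω) :
    P {ω | ∀ j, 1 ≤ j → |V j ω| + |Δ j ω| < δ} = 0 := by
  have hV : ∀ j, StronglyMeasurable (V j) := fun j => (hVmeas j).stronglyMeasurable
  have hstep : ∀ k, P (forcedRun V Δ δ (k + 1)) ≤ 2⁻¹ * P (forcedRun V Δ δ k) := by
    intro k
    rw [forcedRun_succ hrec]
    refine measure_inter_le_of_indep ((Filtration.natural V hV).le k) (hVmeas (k + 1))
      (hindep.indep_comap_natural_of_lt hV k.lt_succ_self).symm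
      (measurableSet_natural_forcedRun hV hΔ0 hrec k) (measurable_natural_of_rec hV hΔ0 hrec k)
      (measurableSet_forcedMoves δ) fun c => ?_
    rw [hVunif]
    exact uniformIcc_section_forcedMoves_le hδ c
  have hrun : {ω | ∀ j, 1 ≤ j → |V j ω| + |Δ j ω| < δ} = ⋂ k, forcedRun V Δ δ k := by
    ext ω
    simp only [forcedRun, Set.mem_ofPred_eq, Set.mem_iInter]
    exact ⟨fun h k j h1 _ => h j h1, fun h j h1 => h j j h1 le_rfl⟩
  rw [hrun]
  exact measure_iInter_eq_zero_of_le_mul (by norm_num) hstep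

/-- Let `|Δ₀| < δ`, let `V₁, V₂, …` be i.i.d. uniform on `[-δ, δ]`, and let
`Δⱼ = Δⱼ₋₁ - Vⱼ` for `j ≥ 1`. Then the probability that `|Vⱼ| + |Δⱼ| < δ` holds for
all `j ≥ 1` is `0`: almost surely the run of consecutive forced moves is finite. -/
theorem stmt2 {Ω : Type*} [MeasurableSpace Ω] (P : Measure Ω) [IsProbabilityMeasure P]
    (δ Δ₀ : ℝ) (hδ : 0 < δ) (hΔ₀ : |Δ₀| < δ)
    (V : ℕ → Ω → ℝ) (hVmeas : ∀ j, Measurable (V j))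
    (hindep : iIndepFun V P)
    (hVunif : ∀ j, Measure.map (V j) P = uniformIcc (-δ) δ)
    (Δ : ℕ → Ω → ℝ) (hΔ0 : Δ 0 = fun _ => Δ₀)
    (hrec : ∀ j, Δ (j + 1) = fun ω => Δ j ω - V (j + 1) ω) :
    P {ω | ∀ j, 1 ≤ j → |V j ω| + |Δ j ω| < δ} = 0 :=
  stmt2_general P δ Δ₀ hδ V hVmeas hindep hVunif Δ hΔ0 hrec
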